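/- Each of the following eleven vectors lies in Γ^∨, satisfies ⟨K, ρ⟩ = −4, and admits the indicated representation as a nonnegative integer combination of elements of 𝒜 (hence lies in cone(𝒜)): ρ₁₀ := e_L = A_{25} + B_{136} + B_{146} + B_{256} + B_{346}; ρ₁₁ := 3e_L + e_3 + e_4 + e_5 + 2e_{12} = A_{34;5} + A_{35;4} + A_{25;3} + B_{146}; ρ₁₂ := 2e_L + e_{15} + e_{25} + e_{35} + e_{45} = A_{12} + A_{34} + 2B_{126} + 2B_{346}; ρ₁₃ := 3e_L + 2e_{15} + e_{23} + e_{24} + e_{25} + e_{34} + e_{35} + e_{45} = A_{15} + A_{14} + A_{23} + 2B_{146} + 2B_{236}; ρ₁₄ := 3e_L + e_5 + e_{14} + e_{15} + e_{24} + e_{25} + 2e_{34} = A_{23;5} + A_{15} + A_{25} + B_{136} + B_{146} + B_{236}; ρ₁₅ := 3e_L + 2e_5 + e_{13} + e_{14} + e_{23} + e_{24} = A_{23;5} + A_{24;5} + A_{15} + B_{156} + B_{346}; ρ₁₆ := 2e_L + e_5 + e_{24} + e_{34} = A_{24;5} + A_{15} + B_{136} + B_{156} + B_{236}; ρ₁₇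 := 3e_L + e_{14} + e_{15} + e_{23} + 2e_{25} + 2e_{34} + e_{45} = A_{23} + 2A_{25} + 2B_{136} + 2B_{146}; ρ₁₈ := 2e_L + e_{15} + e_{25} + e_{34} + e_{45} = A_{12;3} + A_{34} + B_{126} + B_{136} + A_{36;1}; ρ₁₉ := 3e_L + e_5 + e_{14} + e_{15} + e_{23} + e_{25} + 2e_{34} = A_{12;5} + A_{15} + A_{25} + B_{136} + B_{246} + B_{346}; ρ₂₀ := 3e_L + e_5 + e_{13} + e_{14} + e_{23} + 2e_{24} + e_{35} = A_{13;5} + A_{35} + A_{45} + 2B_{126} + B_{456}. (These are the anticanonical-degree-4 representatives of the 𝔖₆-orbits of coextremal rays of M̄_{0,6}.) -/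
import Mathlib


noncomputable section

/-- Index in `Fin 16` of the exceptional class `E_{ab}` attached to a pair of points
(points written `0`-based as elements of `Fin 5`, assuming `a < b`):
`(0,1) ↦ 6, (0,2) ↦ 7, …, (3,4) ↦ 15`. -/
def pairIdx : ℕ → ℕ → Fin 16
  | 0, 1 => 6
  | 0, 2 => 7
  | 0, 3 => 8
  | 0, 4 => 9
  | 1, 2 => 10
  | 1, 3 => 11
  | 1, 4 => 12
  | 2, 3 => 13
  | 2, 4 => 14
  | 3, 4 => 15
  | _, _ => 0

/-- The coordinate vector `e_L` (the class `L`). -/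
def eL : Fin 16 → ℝ := Pi.single 0 1

/-- The coordinate vector `e_i` for the point `i ∈ {1,…,5}` (represented `0`-based
by `i : Fin 5`). -/
def eP (i : Fin 5) : Fin 16 → ℝ := Pi.single ⟨i.val + 1, by omega⟩ 1

/-- The coordinate vector `e_{ab}` for a 2-element subset `{a,b} ⊂ {1,…,5}`
(represented `0`-based); symmetric in `a` and `b`. -/
def eE (a b : Fin 5) : Fin 16 → ℝ :=
  Pi.single (if a.val < b.val then pairIdx a.val b.val else pairIdx b.val a.val) 1

/-- The standard inner product on `ℝ¹⁶`. -/
def ip (x y : Fin 16 → ℝ) : ℝ := ∑ i, x i * y i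

def Distinct3 (k l m : Fin 5) : Prop := k ≠ l ∧ k ≠ m ∧ l ≠ m

def Distinct5 (i j k l m : Fin 5) : Prop :=
  i ≠ j ∧ i ≠ k ∧ i ≠ l ∧ i ≠ m ∧ j ≠ k ∧ j ≠ l ∧ j ≠ m ∧ k ≠ l ∧ k ≠ m ∧ l ≠ m

/-- The 40 classes: 25 boundary divisors and 15 fixed-point divisors `F_σ` of `M̄₀₆`. -/
def Gamma : Set (Fin 16 → ℝ) :=
  {v | (∃ i : Fin 5, v = eP i) ∨
       (∃ a b : Fin 5, a ≠ b ∧ v = eE a b) ∨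
       (∃ k l m : Fin 5, Distinct3 k l m ∧
          v = eL - eP k - eP l - eP m - eE k l - eE k m - eE l m) ∨
       (∃ j a b c d : Fin 5, Distinct5 j a b c d ∧
          v = (2 : ℝ) • eL - (∑ i, eP i) - eE a c - eE a d - eE b c - eE b d)}

/-- The dual cone `Γ^∨ = {v : ⟨g,v⟩ ≥ 0 for all g ∈ Γ}`. -/
def GammaDual : Set (Fin 16 → ℝ) := {v | ∀ gv ∈ Gamma, 0 ≤ ip gv v}
/-- `B_{ab6} = -e_{ab}` for a pair `{a,b} ⊂ {1,…,5}`. -/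
def B6 (a b : Fin 5) : Fin 16 → ℝ := -(eE a b)

/-- `B_{ijk} = e_L + e_a + e_b - e_{ab}` for a 3-element `{i,j,k} ⊂ {1,…,5}`
with complement `{a,b}`. -/
def Bv (i j k a b : Fin 5) : Fin 16 → ℝ := eL + eP a + eP b - eE a b

/-- `A_{ij} = e_L + e_{ij} + e_{kl} + e_{km} + e_{lm}` for a pair `{i,j} ⊂ {1,…,5}`
with complement `{k,l,m}`. -/
def A2 (i j k l m : Fin 5) : Fin 16 → ℝ := eL + eE i j + eE k l + eE k m + eE l m

/-- `A_{i6} = -2e_i + Σ_{j≠i} e_{ij}`. -/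
def A6 (i : Fin 5) : Fin 16 → ℝ :=
  -((2 : ℝ) • eP i) + ∑ j, if j ≠ i then eE i j else 0

/-- `A_{ij;k} = e_L + e_k + e_{ab}` for distinct `i,j,k ∈ {1,…,5}`
with `{a,b}` the complement of `{i,j,k}`. -/
def A3 (i j k a b : Fin 5) : Fin 16 → ℝ := eL + eP k + eE a b

/-- `A_{ij;6} = 2e_L + e_k + e_l + e_m + e_{ij}` for a pair `{i,j} ⊂ {1,…,5}`
with complement `{k,l,m}`. -/
def A36 (i j k l m : Fin 5) : Fin 16 → ℝ := (2 : ℝ) • eL + eP k + eP l + eP m + eE i j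

/-- `A_{i6;k} = -e_i + e_{ik}` for distinct `i,k ∈ {1,…,5}`. -/
def A63 (i k : Fin 5) : Fin 16 → ℝ := -(eP i) + eE i k

/-- The set `𝒜` of 95 vectors: pushforwards of the generators of the nef curve cones
of the boundary divisors of `M̄₀₆`. -/
def Aset : Set (Fin 16 → ℝ) :=
  {v | (∃ a b, a ≠ b ∧ v = B6 a b) ∨
       (∃ i j k a b, Distinct5 i j k a b ∧ v = Bv i j k a b) ∨
       (∃ i j k l m, Distinct5 i j k l m ∧ v = A2 i j k l m) ∨
       (∃ i, v = A6 i) ∨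
       (∃ i j k a b, Distinct5 i j k a b ∧ v = A3 i j k a b) ∨
       (∃ i j k l m, Distinct5 i j k l m ∧ v = A36 i j k l m) ∨
       (∃ i k, i ≠ k ∧ v = A63 i k)}

/-- The convex cone generated by a set: all finite nonnegative combinations. -/
def coneGen (S : Set (Fin 16 → ℝ)) : Set (Fin 16 → ℝ) :=
  {v | ∃ (n : ℕ) (c : Fin n → ℝ) (x : Fin n → (Fin 16 → ℝ)),
      (∀ t, 0 ≤ c t) ∧ (∀ t, x t ∈ S) ∧ v = ∑ t, c t • x t}
/-- The canonical class `K = -4e_L + 2(e_1 + ⋯ + e_5) + Σ_{{a,b}} e_{ab}` of `M̄₀₆`. -/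
def Kcl : Fin 16 → ℝ :=
  -((4 : ℝ) • eL) + (2 : ℝ) • (∑ i, eP i) +
    ∑ a : Fin 5, ∑ b : Fin 5, if a < b then eE a b else 0
/-- `ρ₁₀ = e_L`. -/
def ρ₁₀ : Fin 16 → ℝ := eL

/-- `ρ₁₁ = 3e_L + e₃ + e₄ + e₅ + 2e₁₂`. -/
def ρ₁₁ : Fin 16 → ℝ := (3 : ℝ) • eL + eP 2 + eP 3 + eP 4 + (2 : ℝ) • eE 0 1

/-- `ρ₁₂ = 2e_L + e₁₅ + e₂₅ + e₃₅ + e₄₅`. -/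
def ρ₁₂ : Fin 16 → ℝ := (2 : ℝ) • eL + eE 0 4 + eE 1 4 + eE 2 4 + eE 3 4

/-- `ρ₁₃ = 3e_L + 2e₁₅ + e₂₃ + e₂₄ + e₂₅ + e₃₄ + e₃₅ + e₄₅`. -/
def ρ₁₃ : Fin 16 → ℝ :=
  (3 : ℝ) • eL + (2 : ℝ) • eE 0 4 + eE 1 2 + eE 1 3 + eE 1 4 + eE 2 3 + eE 2 4 + eE 3 4

/-- `ρ₁₄ = 3e_L + e₅ + e₁₄ + e₁₅ + e₂₄ + e₂₅ + 2e₃₄`. -/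
def ρ₁₄ : Fin 16 → ℝ :=
  (3 : ℝ) • eL + eP 4 + eE 0 3 + eE 0 4 + eE 1 3 + eE 1 4 + (2 : ℝ) • eE 2 3

/-- `ρ₁₅ = 3e_L + 2e₅ + e₁₃ + e₁₄ + e₂₃ + e₂₄`. -/
def ρ₁₅ : Fin 16 → ℝ :=
  (3 : ℝ) • eL + (2 : ℝ) • eP 4 + eE 0 2 + eE 0 3 + eE 1 2 + eE 1 3

/-- `ρ₁₆ = 2e_L + e₅ + e₂₄ + e₃₄`. -/
def ρ₁₆ : Fin 16 → ℝ := (2 : ℝ) • eL + eP 4 + eE 1 3 + eE 2 3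

/-- `ρ₁₇ = 3e_L + e₁₄ + e₁₅ + e₂₃ + 2e₂₅ + 2e₃₄ + e₄₅`. -/
def ρ₁₇ : Fin 16 → ℝ :=
  (3 : ℝ) • eL + eE 0 3 + eE 0 4 + eE 1 2 + (2 : ℝ) • eE 1 4 + (2 : ℝ) • eE 2 3 + eE 3 4

/-- `ρ₁₈ = 2e_L + e₁₅ + e₂₅ + e₃₄ + e₄₅`. -/
def ρ₁₈ : Fin 16 → ℝ := (2 : ℝ) • eL + eE 0 4 + eE 1 4 + eE 2 3 + eE 3 4

/-- `ρ₁₉ = 3e_L + e₅ + e₁₄ + e₁₅ + e₂₃ + e₂₅ + 2e₃₄`. -/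
def ρ₁₉ : Fin 16 → ℝ :=
  (3 : ℝ) • eL + eP 4 + eE 0 3 + eE 0 4 + eE 1 2 + eE 1 4 + (2 : ℝ) • eE 2 3

/-- `ρ₂₀ = 3e_L + e₅ + e₁₃ + e₁₄ + e₂₃ + 2e₂₄ + e₃₅`. -/
def ρ₂₀ : Fin 16 → ℝ :=
  (3 : ℝ) • eL + eP 4 + eE 0 2 + eE 0 3 + eE 1 2 + (2 : ℝ) • eE 1 3 + eE 2 4


namespace Deg4Aux

instance (k l m : Fin 5) : Decidable (Distinct3 k l m) := by
  unfold Distinct3; infer_instance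

instance (i j k l m : Fin 5) : Decidable (Distinct5 i j k l m) := by
  unfold Distinct5; infer_instance

/-- Cast an integer vector to a real vector. -/
def zc (v : Fin 16 → ℤ) : Fin 16 → ℝ := fun i => (v i : ℝ)

lemma zc_single (j : Fin 16) : Pi.single j (1 : ℝ) = zc (Pi.single j 1) := by
  funext i
  simp only [zc, Pi.single_apply]
  split <;> simp

@[simp] lemma zc_add (u v : Fin 16 → ℤ) : zc u + zc v = zc (u + v) := by
  funext i; simp [zc]

@[simp] lemma zc_sub (u v : Fin 16 → ℤ) : zc u - zc v = zc (u - v) := by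
  funext i; simp [zc]

@[simp] lemma zc_neg (u : Fin 16 → ℤ) : -zc u = zc (-u) := by
  funext i; simp [zc]

@[simp] lemma zc_smul2 (u : Fin 16 → ℤ) : (2 : ℝ) • zc u = zc ((2 : ℤ) • u) := by
  funext i; simp [zc]

@[simp] lemma zc_smul3 (u : Fin 16 → ℤ) : (3 : ℝ) • zc u = zc ((3 : ℤ) • u) := by
  funext i; simp [zc]

@[simp] lemma zc_smul4 (u : Fin 16 → ℤ) : (4 : ℝ) • zc u = zc ((4 : ℤ) • u) := by
  funext i; simp [zc]

@[simp] lemma zc_zero : (0 : Fin 16 → ℝ) = zc 0 := by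
  funext i; simp [zc]

@[simp] lemma zc_ite (p : Prop) [Decidable p] (u v : Fin 16 → ℤ) :
    (if p then zc u else zc v) = zc (if p then u else v) := by
  split <;> rfl

@[simp] lemma zc_sum {α : Type*} (s : Finset α) (f : α → Fin 16 → ℤ) :
    (∑ a ∈ s, zc (f a)) = zc (∑ a ∈ s, f a) := by
  funext i; simp [zc, Finset.sum_apply]

/-- Integer dot product. -/
def zdot (u v : Fin 16 → ℤ) : ℤ := ∑ i, u i * v i

lemma ip_zc (u v : Fin 16 → ℤ) : ip (zc u) (zc v) = ((zdot u v : ℤ) : ℝ) := by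
  simp [ip, zdot, zc]

lemma zdot_single (j : Fin 16) (r : Fin 16 → ℤ) : zdot (Pi.single j 1) r = r j := by
  simp [zdot, Pi.single_apply]

def zL : Fin 16 → ℤ := Pi.single 0 1
def zP (i : Fin 5) : Fin 16 → ℤ := Pi.single ⟨i.val + 1, by omega⟩ 1
def zE (a b : Fin 5) : Fin 16 → ℤ :=
  Pi.single (if a.val < b.val then pairIdx a.val b.val else pairIdx b.val a.val) 1

@[simp] lemma eL_eq : eL = zc zL := zc_single _
@[simp] lemma eP_eq (i : Fin 5) : eP i = zc (zP i) := zc_single _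
@[simp] lemma eE_eq (a b : Fin 5) : eE a b = zc (zE a b) := zc_single _

def zK : Fin 16 → ℤ :=
  -((4 : ℤ) • zL) + (2 : ℤ) • (∑ i, zP i) +
    ∑ a : Fin 5, ∑ b : Fin 5, if a < b then zE a b else 0

lemma Kcl_eq : Kcl = zc zK := by
  simp only [Kcl, zK, eL_eq, eP_eq, eE_eq, zc_smul2, zc_smul4, zc_neg, zc_zero,
    zc_ite, zc_sum, zc_add]

lemma mem_dual (r : Fin 16 → ℤ)
    (h0 : ∀ j : Fin 16, 0 ≤ r j)
    (h3 : ∀ k l m : Fin 5, Distinct3 k l m →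
      0 ≤ zdot (zL - zP k - zP l - zP m - zE k l - zE k m - zE l m) r)
    (h4 : ∀ j a b c d : Fin 5, Distinct5 j a b c d →
      0 ≤ zdot ((2 : ℤ) • zL - (∑ i, zP i) - zE a c - zE a d - zE b c - zE b d) r) :
    zc r ∈ GammaDual := by
  rintro gv (⟨i, rfl⟩ | ⟨a, b, -, rfl⟩ | ⟨k, l, m, h, rfl⟩ | ⟨j, a, b, c, d, h, rfl⟩)
  · rw [eP_eq, ip_zc, zP, zdot_single]
    exact_mod_cast h0 _
  · rw [eE_eq, ip_zc, zE, zdot_single]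
    exact_mod_cast h0 _
  · rw [show eL - eP k - eP l - eP m - eE k l - eE k m - eE l m =
        zc (zL - zP k - zP l - zP m - zE k l - zE k m - zE l m) by
        simp only [eL_eq, eP_eq, eE_eq, zc_sub], ip_zc]
    exact_mod_cast h3 k l m h
  · rw [show (2 : ℝ) • eL - (∑ i, eP i) - eE a c - eE a d - eE b c - eE b d =
        zc ((2 : ℤ) • zL - (∑ i, zP i) - zE a c - zE a d - zE b c - zE b d) by
        simp only [eL_eq, eP_eq, eE_eq, zc_smul2, zc_sum, zc_sub], ip_zc]
    exact_mod_cast h4 j a b c d h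

lemma coneGen_of_mem {S : Set (Fin 16 → ℝ)} {v : Fin 16 → ℝ} (h : v ∈ S) :
    v ∈ coneGen S :=
  ⟨1, fun _ => 1, fun _ => v, fun _ => zero_le_one, fun _ => h, by simp⟩

lemma coneGen_add {S : Set (Fin 16 → ℝ)} {u v : Fin 16 → ℝ}
    (hu : u ∈ coneGen S) (hv : v ∈ coneGen S) : u + v ∈ coneGen S := by
  obtain ⟨n, c, x, hc, hx, rfl⟩ := hu
  obtain ⟨m, d, y, hd, hy, rfl⟩ := hv
  refine ⟨n + m, Fin.append c d, Fin.append x y, ?_, ?_, ?_⟩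
  · intro t
    refine Fin.addCases (fun i => ?_) (fun i => ?_) t
    · simpa [Fin.append_left] using hc i
    · simpa [Fin.append_right] using hd i
  · intro t
    refine Fin.addCases (fun i => ?_) (fun i => ?_) t
    · simpa [Fin.append_left] using hx i
    · simpa [Fin.append_right] using hy i
  · simp [Fin.sum_univ_add, Fin.append_left, Fin.append_right]

lemma coneGen_smul {S : Set (Fin 16 → ℝ)} {c : ℝ} {v : Fin 16 → ℝ}
    (hc : 0 ≤ c) (hv : v ∈ coneGen S) : c • v ∈ coneGen S := by
  obtain ⟨n, d, x, hd, hx, rfl⟩ := hv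
  exact ⟨n, fun t => c * d t, x, fun t => mul_nonneg hc (hd t), hx, by
    simp [Finset.smul_sum, smul_smul]⟩

lemma memB6 (a b : Fin 5) (h : a ≠ b) : B6 a b ∈ Aset := Or.inl ⟨a, b, h, rfl⟩
lemma memA2 (i j k l m : Fin 5) (h : Distinct5 i j k l m) : A2 i j k l m ∈ Aset :=
  Or.inr (Or.inr (Or.inl ⟨i, j, k, l, m, h, rfl⟩))
lemma memA3 (i j k a b : Fin 5) (h : Distinct5 i j k a b) : A3 i j k a b ∈ Aset :=
  Or.inr (Or.inr (Or.inr (Or.inr (Or.inl ⟨i, j, k, a, b, h, rfl⟩))))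
lemma memA63 (i k : Fin 5) (h : i ≠ k) : A63 i k ∈ Aset :=
  Or.inr (Or.inr (Or.inr (Or.inr (Or.inr (Or.inr ⟨i, k, h, rfl⟩)))))

def z10 : Fin 16 → ℤ := zL
def z11 : Fin 16 → ℤ := (3 : ℤ) • zL + zP 2 + zP 3 + zP 4 + (2 : ℤ) • zE 0 1
def z12 : Fin 16 → ℤ := (2 : ℤ) • zL + zE 0 4 + zE 1 4 + zE 2 4 + zE 3 4
def z13 : Fin 16 → ℤ := (3 : ℤ) • zL + (2 : ℤ) • zE 0 4 + zE 1 2 + zE 1 3 + zE 1 4 + zE 2 3 + zE 2 4 + zE 3 4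
def z14 : Fin 16 → ℤ := (3 : ℤ) • zL + zP 4 + zE 0 3 + zE 0 4 + zE 1 3 + zE 1 4 + (2 : ℤ) • zE 2 3
def z15 : Fin 16 → ℤ := (3 : ℤ) • zL + (2 : ℤ) • zP 4 + zE 0 2 + zE 0 3 + zE 1 2 + zE 1 3
def z16 : Fin 16 → ℤ := (2 : ℤ) • zL + zP 4 + zE 1 3 + zE 2 3
def z17 : Fin 16 → ℤ := (3 : ℤ) • zL + zE 0 3 + zE 0 4 + zE 1 2 + (2 : ℤ) • zE 1 4 + (2 : ℤ) • zE 2 3 + zE 3 4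
def z18 : Fin 16 → ℤ := (2 : ℤ) • zL + zE 0 4 + zE 1 4 + zE 2 3 + zE 3 4
def z19 : Fin 16 → ℤ := (3 : ℤ) • zL + zP 4 + zE 0 3 + zE 0 4 + zE 1 2 + zE 1 4 + (2 : ℤ) • zE 2 3
def z20 : Fin 16 → ℤ := (3 : ℤ) • zL + zP 4 + zE 0 2 + zE 0 3 + zE 1 2 + (2 : ℤ) • zE 1 3 + zE 2 4

lemma bundle {rho d : Fin 16 → ℝ} (z : Fin 16 → ℤ) (hz : rho = zc z)
    (h0 : ∀ j : Fin 16, 0 ≤ z j)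
    (h3 : ∀ k l m : Fin 5, Distinct3 k l m →
      0 ≤ zdot (zL - zP k - zP l - zP m - zE k l - zE k m - zE l m) z)
    (h4 : ∀ j a b c d : Fin 5, Distinct5 j a b c d →
      0 ≤ zdot ((2 : ℤ) • zL - (∑ i, zP i) - zE a c - zE a d - zE b c - zE b d) z)
    (hK : zdot zK z = -4)
    (heq : rho = d) (hd : d ∈ coneGen Aset) :
    rho ∈ GammaDual ∧ ip Kcl rho = -4 ∧ rho = d ∧ rho ∈ coneGen Aset := by
  refine ⟨?_, ?_, heq, ?_⟩
  · rw [hz]; exact mem_dual z h0 h3 h4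
  · rw [Kcl_eq, hz, ip_zc, hK]; norm_num
  · rw [heq]
    exact hd

end Deg4Aux

open Deg4Aux

set_option maxHeartbeats 4000000 in
/-- The degree-4 coextremal representatives lie in `Γ^∨`, have `⟨K,ρ⟩ = -4`, and
decompose as stated in the paper; hence each lies in `cone(𝒜)`. -/
theorem deg4_coextremal_decompositions :
    (ρ₁₀ ∈ GammaDual ∧ ip Kcl ρ₁₀ = -4 ∧
      ρ₁₀ = A2 1 4 0 2 3 + B6 0 2 + B6 0 3 + B6 1 4 + B6 2 3 ∧
      ρ₁₀ ∈ coneGen Aset) ∧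
    (ρ₁₁ ∈ GammaDual ∧ ip Kcl ρ₁₁ = -4 ∧
      ρ₁₁ = A3 2 3 4 0 1 + A3 2 4 3 0 1 + A3 1 4 2 0 3 + B6 0 3 ∧
      ρ₁₁ ∈ coneGen Aset) ∧
    (ρ₁₂ ∈ GammaDual ∧ ip Kcl ρ₁₂ = -4 ∧
      ρ₁₂ = A2 0 1 2 3 4 + A2 2 3 0 1 4 + (2 : ℝ) • B6 0 1 + (2 : ℝ) • B6 2 3 ∧
      ρ₁₂ ∈ coneGen Aset) ∧
    (ρ₁₃ ∈ GammaDual ∧ ip Kcl ρ₁₃ = -4 ∧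
      ρ₁₃ = A2 0 4 1 2 3 + A2 0 3 1 2 4 + A2 1 2 0 3 4 +
        (2 : ℝ) • B6 0 3 + (2 : ℝ) • B6 1 2 ∧
      ρ₁₃ ∈ coneGen Aset) ∧
    (ρ₁₄ ∈ GammaDual ∧ ip Kcl ρ₁₄ = -4 ∧
      ρ₁₄ = A3 1 2 4 0 3 + A2 0 4 1 2 3 + A2 1 4 0 2 3 + B6 0 2 + B6 0 3 + B6 1 2 ∧
      ρ₁₄ ∈ coneGen Aset) ∧
    (ρ₁₅ ∈ GammaDual ∧ ip Kcl ρ₁₅ = -4 ∧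
      ρ₁₅ = A3 1 2 4 0 3 + A3 1 3 4 0 2 + A2 0 4 1 2 3 + B6 0 4 + B6 2 3 ∧
      ρ₁₅ ∈ coneGen Aset) ∧
    (ρ₁₆ ∈ GammaDual ∧ ip Kcl ρ₁₆ = -4 ∧
      ρ₁₆ = A3 1 3 4 0 2 + A2 0 4 1 2 3 + B6 0 2 + B6 0 4 + B6 1 2 ∧
      ρ₁₆ ∈ coneGen Aset) ∧
    (ρ₁₇ ∈ GammaDual ∧ ip Kcl ρ₁₇ = -4 ∧
      ρ₁₇ = A2 1 2 0 3 4 + (2 : ℝ) • A2 1 4 0 2 3 + (2 : ℝ) • B6 0 2 + (2 : ℝ) • B6 0 3 ∧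
      ρ₁₇ ∈ coneGen Aset) ∧
    (ρ₁₈ ∈ GammaDual ∧ ip Kcl ρ₁₈ = -4 ∧
      ρ₁₈ = A3 0 1 2 3 4 + A2 2 3 0 1 4 + B6 0 1 + B6 0 2 + A63 2 0 ∧
      ρ₁₈ ∈ coneGen Aset) ∧
    (ρ₁₉ ∈ GammaDual ∧ ip Kcl ρ₁₉ = -4 ∧
      ρ₁₉ = A3 0 1 4 2 3 + A2 0 4 1 2 3 + A2 1 4 0 2 3 + B6 0 2 + B6 1 3 + B6 2 3 ∧
      ρ₁₉ ∈ coneGen Aset) ∧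
    (ρ₂₀ ∈ GammaDual ∧ ip Kcl ρ₂₀ = -4 ∧
      ρ₂₀ = A3 0 2 4 1 3 + A2 2 4 0 1 3 + A2 3 4 0 1 2 + (2 : ℝ) • B6 0 1 + B6 3 4 ∧
      ρ₂₀ ∈ coneGen Aset) := by
  refine ⟨?_, ?_, ?_, ?_, ?_, ?_, ?_, ?_, ?_, ?_, ?_⟩
  · -- ρ₁₀
    have heq : ρ₁₀ = A2 1 4 0 2 3 + B6 0 2 + B6 0 3 + B6 1 4 + B6 2 3 := by
      simp only [ρ₁₀, A2, A3, B6, A63, eL_eq, eP_eq, eE_eq, zc_neg, zc_smul2, zc_smul3,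
        zc_add, zc_sub]
      exact congrArg zc (by decide)
    exact bundle z10
      (by simp only [ρ₁₀, z10, eL_eq, eP_eq, eE_eq, zc_smul2, zc_smul3, zc_add])
      (by decide) (by decide) (by decide) (by decide) heq
      (coneGen_add (coneGen_add (coneGen_add (coneGen_add (coneGen_of_mem (memA2 1 4 0 2 3 (by decide))) (coneGen_of_mem (memB6 0 2 (by decide)))) (coneGen_of_mem (memB6 0 3 (by decide)))) (coneGen_of_mem (memB6 1 4 (by decide)))) (coneGen_of_mem (memB6 2 3 (by decide))))
  · -- ρ₁₁
    have heq : ρ₁₁ = A3 2 3 4 0 1 + A3 2 4 3 0 1 + A3 1 4 2 0 3 + B6 0 3 := by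
      simp only [ρ₁₁, A2, A3, B6, A63, eL_eq, eP_eq, eE_eq, zc_neg, zc_smul2, zc_smul3,
        zc_add, zc_sub]
      exact congrArg zc (by decide)
    exact bundle z11
      (by simp only [ρ₁₁, z11, eL_eq, eP_eq, eE_eq, zc_smul2, zc_smul3, zc_add])
      (by decide) (by decide) (by decide) (by decide) heq
      (coneGen_add (coneGen_add (coneGen_add (coneGen_of_mem (memA3 2 3 4 0 1 (by decide))) (coneGen_of_mem (memA3 2 4 3 0 1 (by decide)))) (coneGen_of_mem (memA3 1 4 2 0 3 (by decide)))) (coneGen_of_mem (memB6 0 3 (by decide))))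
  · -- ρ₁₂
    have heq : ρ₁₂ = A2 0 1 2 3 4 + A2 2 3 0 1 4 + (2 : ℝ) • B6 0 1 + (2 : ℝ) • B6 2 3 := by
      simp only [ρ₁₂, A2, A3, B6, A63, eL_eq, eP_eq, eE_eq, zc_neg, zc_smul2, zc_smul3,
        zc_add, zc_sub]
      exact congrArg zc (by decide)
    exact bundle z12
      (by simp only [ρ₁₂, z12, eL_eq, eP_eq, eE_eq, zc_smul2, zc_smul3, zc_add])
      (by decide) (by decide) (by decide) (by decide) heq
      (coneGen_add (coneGen_add (coneGen_add (coneGen_of_mem (memA2 0 1 2 3 4 (by decide))) (coneGen_of_mem (memA2 2 3 0 1 4 (by decide)))) (coneGen_smul (by norm_num) (coneGen_of_mem (memB6 0 1 (by decide))))) (coneGen_smul (by norm_num) (coneGen_of_mem (memB6 2 3 (by decide)))))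
  · -- ρ₁₃
    have heq : ρ₁₃ = A2 0 4 1 2 3 + A2 0 3 1 2 4 + A2 1 2 0 3 4 + (2 : ℝ) • B6 0 3 + (2 : ℝ) • B6 1 2 := by
      simp only [ρ₁₃, A2, A3, B6, A63, eL_eq, eP_eq, eE_eq, zc_neg, zc_smul2, zc_smul3,
        zc_add, zc_sub]
      exact congrArg zc (by decide)
    exact bundle z13
      (by simp only [ρ₁₃, z13, eL_eq, eP_eq, eE_eq, zc_smul2, zc_smul3, zc_add])
      (by decide) (by decide) (by decide) (by decide) heq
      (coneGen_add (coneGen_add (coneGen_add (coneGen_add (coneGen_of_mem (memA2 0 4 1 2 3 (by decide))) (coneGen_of_mem (memA2 0 3 1 2 4 (by decide)))) (coneGen_of_mem (memA2 1 2 0 3 4 (by decide)))) (coneGen_smul (by norm_num) (coneGen_of_mem (memB6 0 3 (by decide))))) (coneGen_smul (by norm_num) (coneGen_of_mem (memB6 1 2 (by decide)))))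
  · -- ρ₁₄
    have heq : ρ₁₄ = A3 1 2 4 0 3 + A2 0 4 1 2 3 + A2 1 4 0 2 3 + B6 0 2 + B6 0 3 + B6 1 2 := by
      simp only [ρ₁₄, A2, A3, B6, A63, eL_eq, eP_eq, eE_eq, zc_neg, zc_smul2, zc_smul3,
        zc_add, zc_sub]
      exact congrArg zc (by decide)
    exact bundle z14
      (by simp only [ρ₁₄, z14, eL_eq, eP_eq, eE_eq, zc_smul2, zc_smul3, zc_add])
      (by decide) (by decide) (by decide) (by decide) heq
      (coneGen_add (coneGen_add (coneGen_add (coneGen_add (coneGen_add (coneGen_of_mem (memA3 1 2 4 0 3 (by decide))) (coneGen_of_mem (memA2 0 4 1 2 3 (by decide)))) (coneGen_of_mem (memA2 1 4 0 2 3 (by decide)))) (coneGen_of_mem (memB6 0 2 (by decide)))) (coneGen_of_mem (memB6 0 3 (by decide)))) (coneGen_of_mem (memB6 1 2 (by decide))))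
  · -- ρ₁₅
    have heq : ρ₁₅ = A3 1 2 4 0 3 + A3 1 3 4 0 2 + A2 0 4 1 2 3 + B6 0 4 + B6 2 3 := by
      simp only [ρ₁₅, A2, A3, B6, A63, eL_eq, eP_eq, eE_eq, zc_neg, zc_smul2, zc_smul3,
        zc_add, zc_sub]
      exact congrArg zc (by decide)
    exact bundle z15
      (by simp only [ρ₁₅, z15, eL_eq, eP_eq, eE_eq, zc_smul2, zc_smul3, zc_add])
      (by decide) (by decide) (by decide) (by decide) heq
      (coneGen_add (coneGen_add (coneGen_add (coneGen_add (coneGen_of_mem (memA3 1 2 4 0 3 (by decide))) (coneGen_of_mem (memA3 1 3 4 0 2 (by decide)))) (coneGen_of_mem (memA2 0 4 1 2 3 (by decide)))) (coneGen_of_mem (memB6 0 4 (by decide)))) (coneGen_of_mem (memB6 2 3 (by decide))))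
  · -- ρ₁₆
    have heq : ρ₁₆ = A3 1 3 4 0 2 + A2 0 4 1 2 3 + B6 0 2 + B6 0 4 + B6 1 2 := by
      simp only [ρ₁₆, A2, A3, B6, A63, eL_eq, eP_eq, eE_eq, zc_neg, zc_smul2, zc_smul3,
        zc_add, zc_sub]
      exact congrArg zc (by decide)
    exact bundle z16
      (by simp only [ρ₁₆, z16, eL_eq, eP_eq, eE_eq, zc_smul2, zc_smul3, zc_add])
      (by decide) (by decide) (by decide) (by decide) heq
      (coneGen_add (coneGen_add (coneGen_add (coneGen_add (coneGen_of_mem (memA3 1 3 4 0 2 (by decide))) (coneGen_of_mem (memA2 0 4 1 2 3 (by decide)))) (coneGen_of_mem (memB6 0 2 (by decide)))) (coneGen_of_mem (memB6 0 4 (by decide)))) (coneGen_of_mem (memB6 1 2 (by decide))))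
  · -- ρ₁₇
    have heq : ρ₁₇ = A2 1 2 0 3 4 + (2 : ℝ) • A2 1 4 0 2 3 + (2 : ℝ) • B6 0 2 + (2 : ℝ) • B6 0 3 := by
      simp only [ρ₁₇, A2, A3, B6, A63, eL_eq, eP_eq, eE_eq, zc_neg, zc_smul2, zc_smul3,
        zc_add, zc_sub]
      exact congrArg zc (by decide)
    exact bundle z17
      (by simp only [ρ₁₇, z17, eL_eq, eP_eq, eE_eq, zc_smul2, zc_smul3, zc_add])
      (by decide) (by decide) (by decide) (by decide) heq
      (coneGen_add (coneGen_add (coneGen_add (coneGen_of_mem (memA2 1 2 0 3 4 (by decide))) (coneGen_smul (by norm_num) (coneGen_of_mem (memA2 1 4 0 2 3 (by decide))))) (coneGen_smul (by norm_num) (coneGen_of_mem (memB6 0 2 (by decide))))) (coneGen_smul (by norm_num) (coneGen_of_mem (memB6 0 3 (by decide)))))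
  · -- ρ₁₈
    have heq : ρ₁₈ = A3 0 1 2 3 4 + A2 2 3 0 1 4 + B6 0 1 + B6 0 2 + A63 2 0 := by
      simp only [ρ₁₈, A2, A3, B6, A63, eL_eq, eP_eq, eE_eq, zc_neg, zc_smul2, zc_smul3,
        zc_add, zc_sub]
      exact congrArg zc (by decide)
    exact bundle z18
      (by simp only [ρ₁₈, z18, eL_eq, eP_eq, eE_eq, zc_smul2, zc_smul3, zc_add])
      (by decide) (by decide) (by decide) (by decide) heq
      (coneGen_add (coneGen_add (coneGen_add (coneGen_add (coneGen_of_mem (memA3 0 1 2 3 4 (by decide))) (coneGen_of_mem (memA2 2 3 0 1 4 (by decide)))) (coneGen_of_mem (memB6 0 1 (by decide)))) (coneGen_of_mem (memB6 0 2 (by decide)))) (coneGen_of_mem (memA63 2 0 (by decide))))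
  · -- ρ₁₉
    have heq : ρ₁₉ = A3 0 1 4 2 3 + A2 0 4 1 2 3 + A2 1 4 0 2 3 + B6 0 2 + B6 1 3 + B6 2 3 := by
      simp only [ρ₁₉, A2, A3, B6, A63, eL_eq, eP_eq, eE_eq, zc_neg, zc_smul2, zc_smul3,
        zc_add, zc_sub]
      exact congrArg zc (by decide)
    exact bundle z19
      (by simp only [ρ₁₉, z19, eL_eq, eP_eq, eE_eq, zc_smul2, zc_smul3, zc_add])
      (by decide) (by decide) (by decide) (by decide) heq
      (coneGen_add (coneGen_add (coneGen_add (coneGen_add (coneGen_add (coneGen_of_mem (memA3 0 1 4 2 3 (by decide))) (coneGen_of_mem (memA2 0 4 1 2 3 (by decide)))) (coneGen_of_mem (memA2 1 4 0 2 3 (by decide)))) (coneGen_of_mem (memB6 0 2 (by decide)))) (coneGen_of_mem (memB6 1 3 (by decide)))) (coneGen_of_mem (memB6 2 3 (by decide))))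
  · -- ρ₂₀
    have heq : ρ₂₀ = A3 0 2 4 1 3 + A2 2 4 0 1 3 + A2 3 4 0 1 2 + (2 : ℝ) • B6 0 1 + B6 3 4 := by
      simp only [ρ₂₀, A2, A3, B6, A63, eL_eq, eP_eq, eE_eq, zc_neg, zc_smul2, zc_smul3,
        zc_add, zc_sub]
      exact congrArg zc (by decide)
    exact bundle z20
      (by simp only [ρ₂₀, z20, eL_eq, eP_eq, eE_eq, zc_smul2, zc_smul3, zc_add])
      (by decide) (by decide) (by decide) (by decide) heq
      (coneGen_add (coneGen_add (coneGen_add (coneGen_add (coneGen_of_mem (memA3 0 2 4 1 3 (by decide))) (coneGen_of_mem (memA2 2 4 0 1 3 (by decide)))) (coneGen_of_mem (memA2 3 4 0 1 2 (by decide)))) (coneGen_smul (by norm_num) (coneGen_of_mem (memB6 0 1 (by decide))))) (coneGen_of_mem (memB6 3 4 (by decide))))
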